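/- arXiv:1806.09299 — 5 statements merged into one kernel-verified Lean document; each statement's English description precedes it below -/
import Mathlib

section
/- For every nonempty admissible index k, one has ζ(k†) = ζ(k). -/
/-- The multiple zeta value `ζ(k₁,…,k_r) = ∑_{0<n₁<⋯<n_r} 1/(n₁^{k₁}⋯n_r^{k_r})`. -/
noncomputable def mzv (k : List ℕ) : ℝ :=
  ∑' n : {n : Fin k.length → ℕ // StrictMono n ∧ ∀ i, 0 < n i},
    ∏ i, ((n.1 i : ℝ) ^ k.get i)⁻¹

/-- `S(k) = {k₁, k₁+k₂, …, k₁+⋯+k_{r-1}}`, the set of proper partial sums of an index. -/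
def partialSums (k : List ℕ) : Finset ℕ :=
  ((List.range (k.length - 1)).map fun j => (k.take (j + 1)).sum).toFinset

/-- The index of weight `n` whose set of proper partial sums is `S ⊆ {1,…,n-1}`. -/
def indexOfSet (n : ℕ) (S : Finset ℕ) : List ℕ :=
  let l := Finset.sort (insert n S) (· ≤ ·)
  List.zipWith (· - ·) l (0 :: l)

/-- Hoffman's dual `k^∨`: the unique index of weight `n = wt(k)` with
`S(k^∨) = {1,…,n-1} \ S(k)`. -/
def hdual (k : List ℕ) : List ℕ :=
  indexOfSet k.sum (Finset.Ioo 0 k.sum \ partialSums k)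

/-- `P` adds `1` to the last entry of a nonempty index. -/
def lastInc (k : List ℕ) : List ℕ := k.dropLast ++ [k.getLast! + 1]

/-- `P⁻¹` subtracts `1` from the last entry of a nonempty index. -/
def lastDec (k : List ℕ) : List ℕ := k.dropLast ++ [k.getLast! - 1]

/-- The dual index: for an admissible `k = ({1}^{a₁-1},b₁+1,…,{1}^{a_s-1},b_s+1)`,
`k† = ({1}^{b_s-1},a_s+1,…,{1}^{b₁-1},a₁+1)`; equivalently `k† = P(R((P⁻¹k)^∨))`
where `R` reverses. -/
def dagger (k : List ℕ) : List ℕ := lastInc ((hdual (lastDec k)).reverse)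

/-!
Following Seki and Yamamoto, consider the connected sum
`Z(k; l) = ∑ m₁^{-k₁} ⋯ m_r^{-k_r} · n₁^{-l₁} ⋯ n_s^{-l_s} · m_r! n_s! / (m_r + n_s)!`
over `0 < m₁ < ⋯ < m_r` and `0 < n₁ < ⋯ < n_s` (with `m_r = 0` if `r = 0`, and likewise for `n_s`).
It is symmetric in `k` and `l`, and `Z(k; ∅) = ζ(k)`. The telescoping identity
`∑_{b > n} b⁻¹ · m! b! / (m + b)! = m⁻¹ · m! n! / (m + n)!` gives the transport relations
`Z(k, x + 1; l) = Z(k, x; l, 1)` and, by symmetry, `Z(k, 1; l, y) = Z(k; l, y + 1)`.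

Encode an index as a word in two letters, an entry `x` becoming one `false` followed by `x - 1`
letters `true`. Each transport step removes the last letter of the word of `k`, flips it and
appends it to the word of `l`, so `Z(k; ∅) = Z(∅; m)` where the word of `m` is the reversed,
flipped word of `k`. That is the word of `k†`: Hoffman's dual complements the set of partial sums,
which flips every letter of the word but the first.

All sums are taken in `ℝ≥0∞`, so they can be rearranged freely.
-/

open scoped ENNReal
open Filter Topology

namespace MultipleZeta

/-- The Seki–Yamamoto connector `m! n! / (m + n)!`. -/
noncomputable def connector (m n : ℕ) : ℝ≥0∞ := ((m + n).choose m : ℝ≥0∞)⁻¹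

lemma connector_comm (m n : ℕ) : connector m n = connector n m := by
  rw [connector, connector, Nat.choose_symm_add, add_comm]

@[simp]
lemma connector_zero_right (m : ℕ) : connector m 0 = 1 := by
  simp [connector]

lemma connector_ne_top (m n : ℕ) : connector m n ≠ ⊤ := by
  simp [connector, Nat.choose_eq_zero_iff]

lemma connector_eq_connector_succ_add (m n : ℕ) :
    connector m n = connector m (n + 1) + m * ((n + 1 : ℕ) : ℝ≥0∞)⁻¹ * connector m (n + 1) := by
  have hchoose : ((m + n).choose m * (m + n + 1) : ℝ) = (m + n + 1).choose m * (n + 1) := by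
    exact_mod_cast (Nat.choose_mul_succ_eq (m + n) m).trans (by congr 2; omega)
  have hx : ((m + n).choose m : ℝ) ≠ 0 := Nat.cast_ne_zero.2 (Nat.choose_pos (by omega)).ne'
  have hy : ((m + n + 1).choose m : ℝ) ≠ 0 := Nat.cast_ne_zero.2 (Nat.choose_pos (by omega)).ne'
  have htop : (m : ℝ≥0∞) * ((n + 1 : ℕ) : ℝ≥0∞)⁻¹ * connector m (n + 1) ≠ ⊤ := by
    simp [ENNReal.mul_eq_top, connector_ne_top]
  rw [← ENNReal.toReal_eq_toReal_iff' (connector_ne_top m n)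
      (ENNReal.add_ne_top.2 ⟨connector_ne_top _ _, htop⟩),
    ENNReal.toReal_add (connector_ne_top _ _) htop]
  simp only [connector, ← add_assoc, ENNReal.toReal_mul, ENNReal.toReal_inv,
    ENNReal.toReal_natCast]
  field_simp
  push_cast
  linear_combination -hchoose

lemma tendsto_connector_atTop {m : ℕ} (hm : 1 ≤ m) : Tendsto (connector m) atTop (𝓝 0) := by
  refine tendsto_of_tendsto_of_tendsto_of_le_of_le tendsto_const_nhds
    ENNReal.tendsto_inv_nat_nhds_zero (fun _ => zero_le) fun n => ?_
  have hle : n ≤ (m + n).choose m := by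
    rw [Nat.choose_symm_add]
    exact (Nat.le_succ n).trans ((Nat.choose_succ_self_right n).symm.trans_le
      (Nat.choose_le_choose n (by omega)))
  exact ENNReal.inv_le_inv.2 (by exact_mod_cast hle)

lemma tsum_eq_of_eq_add_succ {c f : ℕ → ℝ≥0∞} (hcf : ∀ i, c i = c (i + 1) + f i)
    (hc₀ : c 0 ≠ ⊤) (hc : Tendsto c atTop (𝓝 0)) : ∑' i, f i = c 0 := by
  have hpartial (N : ℕ) : ∑ i ∈ Finset.range N, f i + c N = c 0 := by
    induction N with
    | zero => simp
    | succ N ih => rw [Finset.sum_range_succ, add_assoc, add_comm (f N), ← hcf, ih]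
  refine tendsto_nhds_unique (ENNReal.tendsto_nat_tsum f) ?_
  have hsub : (fun N => c 0 - c N) = fun N => ∑ i ∈ Finset.range N, f i := funext fun N =>
    ENNReal.sub_eq_of_eq_add (ne_top_of_le_ne_top hc₀ (le_add_self.trans_eq (hpartial N)))
      (hpartial N).symm
  simpa [← hsub] using ENNReal.Tendsto.sub tendsto_const_nhds hc (Or.inl hc₀)

lemma tsum_subtype_lt_eq_tsum_add {α : Type*} [AddCommMonoid α] [TopologicalSpace α]
    (f : ℕ → α) (n : ℕ) : ∑' b : {b : ℕ // n < b}, f b = ∑' i, f (n + i + 1) :=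
  (Function.Injective.tsum_eq (g := fun i : ℕ => (⟨n + i + 1, by omega⟩ : {b // n < b}))
    (fun i j h => by simpa using congrArg Subtype.val h)
    fun b _ => ⟨b.1 - n - 1, Subtype.ext (by have := b.2; simp only; omega)⟩).symm

lemma tsum_inv_mul_connector {m : ℕ} (hm : 1 ≤ m) (n : ℕ) :
    ∑' b : {b : ℕ // n < b}, (b : ℝ≥0∞)⁻¹ * connector m b = (m : ℝ≥0∞)⁻¹ * connector m n := by
  have htelescope : ∑' i, (m : ℝ≥0∞) * ((n + i + 1 : ℕ) : ℝ≥0∞)⁻¹ * connector m (n + i + 1) =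
      connector m n :=
    tsum_eq_of_eq_add_succ (c := fun i => connector m (n + i))
      (fun i => connector_eq_connector_succ_add m (n + i)) (connector_ne_top m n)
      ((tendsto_connector_atTop hm).comp (tendsto_atTop_mono (fun _ => le_add_self) tendsto_id))
  rw [tsum_subtype_lt_eq_tsum_add (fun b => (b : ℝ≥0∞)⁻¹ * connector m b), ← htelescope,
    ← ENNReal.tsum_mul_left]
  refine tsum_congr fun i => ?_
  rw [← mul_assoc, ← mul_assoc, ENNReal.inv_mul_cancel (by simp; omega) (by simp), one_mul]

/-- `nestedSum k low w = ∑_{low < n₁ < ⋯ < n_r} n₁^{-k₁} ⋯ n_r^{-k_r} w(n_r)`,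
where `w(n_r)` reads `w low` when `k = []`. -/
noncomputable def nestedSum : List ℕ → ℕ → (ℕ → ℝ≥0∞) → ℝ≥0∞
  | [], low, w => w low
  | x :: k, low, w => ∑' a : {a : ℕ // low < a}, ((a : ℝ≥0∞) ^ x)⁻¹ * nestedSum k a w

lemma tsum_mul_nestedSum (k : List ℕ) {ι : Type*} (c : ι → ℝ≥0∞) (low : ℕ)
    (w : ι → ℕ → ℝ≥0∞) :
    ∑' j, c j * nestedSum k low (w j) = nestedSum k low fun n => ∑' j, c j * w j n := by
  induction k generalizing low with
  | nil => rfl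
  | cons x k ih =>
    simp only [nestedSum, ← ih, ← ENNReal.tsum_mul_left]
    rw [ENNReal.tsum_comm]
    exact tsum_congr fun a => tsum_congr fun j => by ring

lemma nestedSum_const_mul (k : List ℕ) (c : ℝ≥0∞) (low : ℕ) (w : ℕ → ℝ≥0∞) :
    nestedSum k low (fun n => c * w n) = c * nestedSum k low w := by
  simpa using (tsum_mul_nestedSum k (fun _ : Unit => c) low fun _ => w).symm

lemma nestedSum_comm (k l : List ℕ) (low low' : ℕ) (F : ℕ → ℕ → ℝ≥0∞) :
    nestedSum k low (fun m => nestedSum l low' (F m)) =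
      nestedSum l low' fun n => nestedSum k low fun m => F m n := by
  induction k generalizing low with
  | nil => rfl
  | cons x k ih =>
    simp only [nestedSum, ih]
    exact tsum_mul_nestedSum l _ low' _

lemma nestedSum_append_singleton (k : List ℕ) (y low : ℕ) (w : ℕ → ℝ≥0∞) :
    nestedSum (k ++ [y]) low w =
      nestedSum k low fun n => ∑' b : {b : ℕ // n < b}, ((b : ℝ≥0∞) ^ y)⁻¹ * w b := by
  induction k generalizing low with
  | nil => rfl
  | cons x k ih => simp only [List.cons_append, nestedSum, ih]

lemma nestedSum_append_one_connector (l : List ℕ) {m : ℕ} (hm : 1 ≤ m) (low : ℕ) :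
    nestedSum (l ++ [1]) low (connector m) = (m : ℝ≥0∞)⁻¹ * nestedSum l low (connector m) := by
  simp only [nestedSum_append_singleton, pow_one, tsum_inv_mul_connector hm, nestedSum_const_mul]

noncomputable def connectedSum (k l : List ℕ) : ℝ≥0∞ :=
  nestedSum k 0 fun m => nestedSum l 0 (connector m)

lemma connectedSum_comm (k l : List ℕ) : connectedSum k l = connectedSum l k := by
  simp only [connectedSum, nestedSum_comm k l, connector_comm]

lemma connectedSum_nil_right (k : List ℕ) : connectedSum k [] = nestedSum k 0 1 := by
  simp only [connectedSum, nestedSum, connector_zero_right]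
  rfl

lemma connectedSum_append_succ (k l : List ℕ) (x : ℕ) :
    connectedSum (k ++ [x + 1]) l = connectedSum (k ++ [x]) (l ++ [1]) := by
  simp only [connectedSum]
  rw [nestedSum_append_singleton k (x + 1), nestedSum_append_singleton k x]
  congr 1
  funext m
  refine tsum_congr fun a => ?_
  have ha : (a : ℕ) ≠ 0 := by have := a.2; omega
  rw [nestedSum_append_one_connector l (by omega), pow_succ,
    ENNReal.mul_inv (Or.inl (by simp [ha])) (Or.inr (by simp [ha]))]
  ring

lemma connectedSum_append_one (k l : List ℕ) (y : ℕ) :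
    connectedSum (k ++ [1]) (l ++ [y]) = connectedSum k (l ++ [y + 1]) := by
  rw [connectedSum_comm, ← connectedSum_append_succ, connectedSum_comm]

abbrev IncreasingTuple (r low : ℕ) : Type := {n : Fin r → ℕ // StrictMono n ∧ ∀ i, low < n i}

def increasingTupleConsEquiv (r low : ℕ) :
    IncreasingTuple (r + 1) low ≃ Σ a : {a : ℕ // low < a}, IncreasingTuple r a where
  toFun n := ⟨⟨n.1 0, n.2.2 0⟩, ⟨Fin.tail n.1, n.2.1.comp Fin.strictMono_succ,
    fun i => n.2.1 (Fin.succ_pos i)⟩⟩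
  invFun p := ⟨Fin.cons p.1.1 p.2.1, Fin.strictMono_cons.2 ⟨p.2.2.2, p.2.2.1⟩,
    Fin.cases p.1.2 fun i => p.1.2.trans (p.2.2.2 i)⟩
  left_inv n := Subtype.ext (Fin.cons_self_tail n.1)
  right_inv _ := rfl

lemma tsum_increasingTuple_eq_nestedSum (k : List ℕ) (low : ℕ) :
    ∑' n : IncreasingTuple k.length low, ∏ i, ((n.1 i : ℝ≥0∞) ^ k.get i)⁻¹ =
      nestedSum k low 1 := by
  induction k generalizing low with
  | nil =>
    have : Unique (IncreasingTuple 0 low) :=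
      ⟨⟨⟨Fin.elim0, fun i => i.elim0, fun i => i.elim0⟩⟩,
        fun _ => Subtype.ext (Subsingleton.elim _ _)⟩
    simp [nestedSum]
  | cons x k ih =>
    change ∑' n : IncreasingTuple (k.length + 1) low, _ = _
    rw [← (increasingTupleConsEquiv k.length low).symm.tsum_eq, ENNReal.tsum_sigma', nestedSum]
    refine tsum_congr fun a => ?_
    rw [← ih, ← ENNReal.tsum_mul_left]
    refine tsum_congr fun t => ?_
    exact Fin.prod_univ_succ (n := k.length) _

lemma mzv_eq_toReal_connectedSum (k : List ℕ) : mzv k = (connectedSum k []).toReal := by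
  have hfin (n : IncreasingTuple k.length 0) : ∏ i, ((n.1 i : ℝ≥0∞) ^ k.get i)⁻¹ ≠ ⊤ :=
    ENNReal.prod_ne_top fun i _ => ENNReal.inv_ne_top.2 (by simp [(n.2.2 i).ne'])
  rw [connectedSum_nil_right, ← tsum_increasingTuple_eq_nestedSum, ENNReal.tsum_toReal_eq hfin]
  simp [mzv, ENNReal.toReal_prod]

def word (k : List ℕ) : List Bool := k.flatMap fun x => false :: List.replicate (x - 1) true

@[simp]
lemma word_nil : word [] = [] := rfl

lemma word_cons (x : ℕ) (k : List ℕ) :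
    word (x :: k) = false :: (List.replicate (x - 1) true ++ word k) := by
  simp [word]

@[simp]
lemma word_append (k l : List ℕ) : word (k ++ l) = word k ++ word l := by
  simp [word]

lemma word_singleton (x : ℕ) : word [x] = false :: List.replicate (x - 1) true := by
  simp [word_cons]

lemma word_eq_nil_or_eq_cons_false (k : List ℕ) : word k = [] ∨ ∃ w, word k = false :: w := by
  cases k with
  | nil => exact Or.inl rfl
  | cons x k => exact Or.inr ⟨_, word_cons x k⟩

lemma word_append_succ (k : List ℕ) {x : ℕ} (hx : 1 ≤ x) :
    word (k ++ [x + 1]) = word (k ++ [x]) ++ [true] := by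
  obtain ⟨y, rfl⟩ := Nat.exists_eq_add_of_le' hx
  simp [word_singleton, List.replicate_succ']

lemma word_length {k : List ℕ} (hk : ∀ x ∈ k, 1 ≤ x) : (word k).length = k.sum := by
  induction k with
  | nil => rfl
  | cons x k ih =>
    simp only [List.forall_mem_cons] at hk
    simp only [word_cons, List.length_cons, List.length_append, List.length_replicate,
      ih hk.2, List.sum_cons]
    omega

lemma word_injective {k₁ k₂ : List ℕ} (hk₁ : ∀ x ∈ k₁, 1 ≤ x) (hk₂ : ∀ x ∈ k₂, 1 ≤ x)
    (h : word k₁ = word k₂) : k₁ = k₂ := by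
  induction k₁ generalizing k₂ with
  | nil => cases k₂ <;> simp_all [word_cons]
  | cons x k₁ ih =>
    cases k₂ with
    | nil => simp [word_cons] at h
    | cons y k₂ =>
      simp only [List.forall_mem_cons] at hk₁ hk₂
      simp only [word_cons, List.cons.injEq, true_and] at h
      -- the next word, if any, starts with `false`, so the leading `true`s are exactly `x - 1`
      have hlead (z : ℕ) (k : List ℕ) :
          (List.replicate (z - 1) true ++ word k).takeWhile id = List.replicate (z - 1) true := by
        rw [List.takeWhile_append_of_pos (by simp)]
        rcases word_eq_nil_or_eq_cons_false k with hw | ⟨w, hw⟩ <;> simp [hw]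
      have hxy : x = y := by
        have := congrArg List.length ((hlead x k₁).symm.trans (h ▸ hlead y k₂))
        simp only [List.length_replicate] at this
        omega
      subst hxy
      rw [ih hk₁.2 hk₂.2 (List.append_cancel_left h)]

theorem connectedSum_eq_of_word {k l m : List ℕ} (hk : ∀ x ∈ k, 1 ≤ x) (hl : ∀ x ∈ l, 1 ≤ x)
    (hm : ∀ x ∈ m, 1 ≤ x) (hw : word m = word l ++ (word k).reverse.map not) :
    connectedSum k l = connectedSum [] m := by
  obtain rfl | ⟨k, x, rfl⟩ := k.eq_nil_or_concat'
  · rw [word_injective hm hl (by simpa using hw)]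
  simp only [List.forall_mem_append, List.forall_mem_singleton] at hk
  obtain ⟨y, rfl⟩ := Nat.exists_eq_add_of_le' hk.2
  rcases Nat.eq_zero_or_pos y with rfl | hy
  · -- `l = []` is impossible: the word of `m` would start with `true`
    obtain rfl | ⟨l, z, rfl⟩ := l.eq_nil_or_concat'
    · rcases word_eq_nil_or_eq_cons_false m with hm' | ⟨w, hm'⟩ <;>
        simp [hw, word_singleton] at hm'
    simp only [List.forall_mem_append, List.forall_mem_singleton] at hl
    rw [connectedSum_append_one]
    refine connectedSum_eq_of_word hk.1 (by simpa [or_imp, forall_and] using hl.1) hm ?_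
    rw [hw, word_append_succ l hl.2]
    simp [word_singleton]
  · obtain ⟨y, rfl⟩ := Nat.exists_eq_add_one.2 hy
    rw [connectedSum_append_succ]
    refine connectedSum_eq_of_word (by simpa [or_imp, forall_and] using hk.1) (l := l ++ [1])
      (by simpa [or_imp, forall_and] using hl) hm ?_
    rw [hw, word_append_succ k (Nat.le_add_left 1 y)]
    simp [word_singleton]
termination_by k.sum
decreasing_by all_goals subst_vars; simp

lemma word_getElem_eq_false_iff {k : List ℕ} (hk : ∀ x ∈ k, 1 ≤ x) {i : ℕ}
    (hi : i < (word k).length) :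
    (word k)[i] = false ↔ ∃ j < k.length, (k.take j).sum = i := by
  induction k generalizing i with
  | nil => simp at hi
  | cons x k ih =>
    simp only [List.forall_mem_cons] at hk
    simp only [word_cons, List.length_cons, List.length_append, List.length_replicate] at hi ⊢
    rcases i with _ | i
    · exact iff_of_true rfl ⟨0, by simp, rfl⟩
    rw [List.getElem_cons_succ, Nat.exists_lt_succ_left]
    simp only [List.take_zero, List.sum_nil, List.take_succ_cons, List.sum_cons]
    rw [or_iff_right (by omega)]
    by_cases hix : i < x - 1
    · rw [List.getElem_append_left (by simpa using hix), List.getElem_replicate]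
      simp only [Bool.true_eq_false, false_iff, not_exists, not_and]
      omega
    · rw [List.getElem_append_right (by simpa using hix), ih hk.2]
      simp only [List.length_replicate]
      refine exists_congr fun j => and_congr_right fun _ => ?_
      omega

lemma exists_sum_take_eq_iff {k : List ℕ} (hk : k ≠ []) (i : ℕ) :
    (∃ j < k.length, (k.take j).sum = i) ↔ i = 0 ∨ i ∈ partialSums k := by
  obtain ⟨r, hr⟩ := Nat.exists_eq_add_one.2 (List.length_pos_iff.2 hk)
  simp only [partialSums, List.mem_toFinset, List.mem_map, List.mem_range, hr,
    Nat.exists_lt_succ_left, List.take_zero, List.sum_nil, Nat.add_sub_cancel, eq_comm (a := 0)]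

def diffs (p : ℕ) (l : List ℕ) : List ℕ := List.zipWith (· - ·) l (p :: l)

@[simp]
lemma length_diffs (p : ℕ) (l : List ℕ) : (diffs p l).length = l.length := by
  simp [diffs]

lemma one_le_of_mem_diffs {p : ℕ} {l : List ℕ} (hl : (p :: l).IsChain (· < ·)) :
    ∀ x ∈ diffs p l, 1 ≤ x := by
  induction l generalizing p with
  | nil => simp [diffs]
  | cons a l ih =>
    rw [List.isChain_cons_cons] at hl
    simp only [diffs, List.zipWith_cons_cons, List.forall_mem_cons] at ih ⊢
    exact ⟨by omega, ih hl.2⟩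

lemma sum_take_succ_diffs {p : ℕ} {l : List ℕ} (hl : (p :: l).IsChain (· < ·)) {j : ℕ}
    (hj : j < l.length) : ((diffs p l).take (j + 1)).sum + p = l[j] := by
  induction l generalizing p j with
  | nil => simp at hj
  | cons a l ih =>
    rw [List.isChain_cons_cons] at hl
    rcases j with _ | j
    · simp [diffs]
      omega
    · have := ih hl.2 (j := j) (by simpa using hj)
      simp only [diffs, List.zipWith_cons_cons, List.take_succ_cons, List.sum_cons] at this ⊢
      simp only [List.getElem_cons_succ]
      omega

lemma sort_insert_of_forall_lt {S : Finset ℕ} {n : ℕ} (hS : ∀ x ∈ S, x < n) :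
    Finset.sort (insert n S) (· ≤ ·) = Finset.sort S (· ≤ ·) ++ [n] := by
  refine (Finset.sortedLT_sort _).eq_of_mem_iff ?_ fun a => ?_
  · rw [List.sortedLT_iff_pairwise, List.pairwise_append]
    refine ⟨(Finset.sortedLT_sort S).pairwise, by simp, fun a ha b hb => ?_⟩
    rw [List.mem_singleton] at hb
    exact hb ▸ hS a (Finset.mem_sort _ |>.1 ha)
  · simp [or_comm]

lemma indexOfSet_spec {n : ℕ} (hn : 1 ≤ n) {S : Finset ℕ} (hS : S ⊆ Finset.Ioo 0 n) :
    (∀ x ∈ indexOfSet n S, 1 ≤ x) ∧ (indexOfSet n S).sum = n ∧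
      partialSums (indexOfSet n S) = S := by
  have hlt : ∀ x ∈ S, 0 < x ∧ x < n := fun x hx => Finset.mem_Ioo.1 (hS hx)
  set s := Finset.sort S (· ≤ ·)
  have hsort := sort_insert_of_forall_lt fun x hx => (hlt x hx).2
  have hchain : (0 :: (s ++ [n])).IsChain (· < ·) := by
    rw [List.isChain_iff_pairwise, List.pairwise_cons, ← List.sortedLT_iff_pairwise]
    refine ⟨fun a ha => ?_, hsort ▸ Finset.sortedLT_sort _⟩
    rcases List.mem_append.1 ha with ha | ha
    · exact (hlt a (Finset.mem_sort _ |>.1 ha)).1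
    · rw [List.mem_singleton.1 ha]; omega
  have hidx : indexOfSet n S = diffs 0 (s ++ [n]) := by
    simp only [indexOfSet, diffs, hsort, s]
  rw [hidx]
  refine ⟨one_le_of_mem_diffs hchain, ?_, ?_⟩
  · have := sum_take_succ_diffs hchain (j := s.length) (by simp)
    simpa [List.take_of_length_le] using this
  · have hsums (j : ℕ) (hj : j < s.length) : ((diffs 0 (s ++ [n])).take (j + 1)).sum = s[j] := by
      have := sum_take_succ_diffs hchain (j := j) (by simpa using Nat.lt_succ_of_lt hj)
      rwa [List.getElem_append_left hj, add_zero] at this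
    ext x
    simp only [partialSums, List.mem_toFinset, List.mem_map, List.mem_range, length_diffs,
      List.length_append, List.length_singleton, Nat.add_sub_cancel]
    rw [← Finset.mem_sort (· ≤ ·), List.mem_iff_getElem]
    exact exists_congr fun j => ⟨fun ⟨hj, h⟩ => ⟨hj, (hsums j hj).symm.trans h⟩,
      fun ⟨hj, h⟩ => ⟨hj, (hsums j hj).trans h⟩⟩

lemma hdual_spec {j : List ℕ} (hj : ∀ x ∈ j, 1 ≤ x) (hne : j ≠ []) :
    (∀ x ∈ hdual j, 1 ≤ x) ∧ (hdual j).sum = j.sum ∧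
      partialSums (hdual j) = Finset.Ioo 0 j.sum \ partialSums j :=
  indexOfSet_spec (List.sum_pos _ hj hne) Finset.sdiff_subset

lemma hdual_ne_nil {j : List ℕ} (hj : ∀ x ∈ j, 1 ≤ x) (hne : j ≠ []) : hdual j ≠ [] := by
  rintro h
  have := List.sum_pos _ hj hne
  rw [← (hdual_spec hj hne).2.1, h, List.sum_nil] at this
  exact Nat.not_succ_le_zero 0 this

lemma word_hdual {j : List ℕ} (hj : ∀ x ∈ j, 1 ≤ x) (hne : j ≠ []) :
    word (hdual j) = false :: ((word j).map not).tail := by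
  obtain ⟨hd, hsum, hps⟩ := hdual_spec hj hne
  have hdne := hdual_ne_nil hj hne
  have hlen : (word (hdual j)).length = (word j).length := by
    rw [word_length hd, word_length hj, hsum]
  refine List.ext_getElem ?_ fun i h₁ h₂ => ?_
  · have : 0 < (word j).length := word_length hj ▸ List.sum_pos _ hj hne
    simp only [List.length_cons, List.length_tail, List.length_map, hlen]
    omega
  rcases i with _ | i
  · exact (word_getElem_eq_false_iff hd h₁).2 ⟨0, List.length_pos_iff.2 hdne, rfl⟩
  have hi : i + 1 ∈ Finset.Ioo 0 j.sum := by
    rw [Finset.mem_Ioo, ← word_length hj, ← hlen]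
    exact ⟨i.succ_pos, h₁⟩
  have hflip : (word (hdual j))[i + 1] = false ↔ ¬ (word j)[i + 1] = false := by
    rw [word_getElem_eq_false_iff hd, exists_sum_take_eq_iff hdne, hps,
      word_getElem_eq_false_iff hj, exists_sum_take_eq_iff hne]
    simp [Finset.mem_sdiff, hi]
  simp only [List.getElem_cons_succ, List.getElem_tail, List.getElem_map]
  revert hflip
  cases (word (hdual j))[i + 1] <;> cases (word j)[i + 1] <;> simp

lemma word_reverse_append_false (k : List ℕ) :
    word k.reverse ++ [false] = false :: (word k).reverse := by
  induction k with
  | nil => rfl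
  | cons x k ih =>
    calc word (x :: k).reverse ++ [false]
        = (word k.reverse ++ [false]) ++ (List.replicate (x - 1) true ++ [false]) := by
          simp [word_singleton]
      _ = false :: (word (x :: k)).reverse := by
          rw [ih]
          simp [word_cons]

lemma word_lastInc {l : List ℕ} (hl : ∀ x ∈ l, 1 ≤ x) (hne : l ≠ []) :
    word (lastInc l) = word l ++ [true] := by
  obtain ⟨l, z, rfl⟩ := (List.eq_nil_or_concat' l).resolve_left hne
  simpa [lastInc] using word_append_succ l (hl z (by simp))

lemma one_le_of_mem_lastInc {l : List ℕ} (hl : ∀ x ∈ l, 1 ≤ x) : ∀ x ∈ lastInc l, 1 ≤ x := by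
  simp only [lastInc, List.mem_append, List.mem_singleton]
  rintro x (hx | rfl)
  exacts [hl x (List.dropLast_subset _ hx), Nat.le_add_left 1 _]

lemma one_le_of_mem_lastDec {k : List ℕ} (hk : ∀ x ∈ k, 1 ≤ x) (hne : k ≠ [])
    (hadm : 2 ≤ k.getLast hne) : ∀ x ∈ lastDec k, 1 ≤ x := by
  obtain ⟨k, x, rfl⟩ := (List.eq_nil_or_concat' k).resolve_left hne
  simp only [List.getLast_concat] at hadm
  simp only [lastDec, List.dropLast_concat, List.mem_append, List.mem_singleton]
  rintro z (hz | hz)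
  · exact hk z (by simp [hz])
  · simp at hz
    omega

lemma lastDec_ne_nil (k : List ℕ) : lastDec k ≠ [] := by
  simp [lastDec]

lemma word_lastDec_append_true {k : List ℕ} (hne : k ≠ []) (hadm : 2 ≤ k.getLast hne) :
    word (lastDec k) ++ [true] = word k := by
  obtain ⟨k, x, rfl⟩ := (List.eq_nil_or_concat' k).resolve_left hne
  simp only [List.getLast_concat] at hadm
  obtain ⟨y, rfl⟩ := Nat.exists_eq_add_of_le' (by omega : 1 ≤ x)
  simp [lastDec, word_append_succ k (by omega : 1 ≤ y)]

lemma one_le_of_mem_dagger {k : List ℕ} (hk : ∀ x ∈ k, 1 ≤ x) (hne : k ≠ [])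
    (hadm : 2 ≤ k.getLast hne) : ∀ x ∈ dagger k, 1 ≤ x :=
  one_le_of_mem_lastInc fun x hx =>
    (hdual_spec (one_le_of_mem_lastDec hk hne hadm) (lastDec_ne_nil k)).1 x (List.mem_reverse.1 hx)

lemma word_dagger {k : List ℕ} (hk : ∀ x ∈ k, 1 ≤ x) (hne : k ≠ []) (hadm : 2 ≤ k.getLast hne) :
    word (dagger k) = (word k).reverse.map not := by
  have hj := one_le_of_mem_lastDec hk hne hadm
  have hjne := lastDec_ne_nil k
  obtain ⟨hd, -, -⟩ := hdual_spec hj hjne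
  obtain ⟨t, ht⟩ : ∃ t, word (lastDec k) = false :: t :=
    (word_eq_nil_or_eq_cons_false _).resolve_left (by simp [lastDec, word_singleton])
  have hrev : word (hdual (lastDec k)).reverse = false :: (t.map not).reverse := by
    refine List.append_cancel_right (bs := [false]) ?_
    rw [word_reverse_append_false, word_hdual hj hjne, ht]
    simp
  rw [dagger, word_lastInc (fun z hz => hd z (List.mem_reverse.1 hz))
      (List.reverse_ne_nil_iff.2 (hdual_ne_nil hj hjne)), hrev,
    ← word_lastDec_append_true hne hadm, ht]
  simp

end MultipleZeta

/-- Duality formula for multiple zeta values. -/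
theorem duality_mzv (k : List ℕ) (hne : k ≠ []) (hpos : ∀ x ∈ k, 1 ≤ x)
    (hadm : 2 ≤ k.getLast hne) :
    mzv (dagger k) = mzv k := by
  rw [MultipleZeta.mzv_eq_toReal_connectedSum, MultipleZeta.mzv_eq_toReal_connectedSum,
    MultipleZeta.connectedSum_comm,
    MultipleZeta.connectedSum_eq_of_word hpos (l := []) (by simp)
      (MultipleZeta.one_le_of_mem_dagger hpos hne hadm)
      (by simpa using MultipleZeta.word_dagger hpos hne hadm)]
end

section
/- For every index k = (k_1,…,k_r) and every integer m ≥ 0, one has in the free ℚ-vector space I on indices: k ⧢ ({1}^m) = ∑_{i=0}^m ∑_e (k ⊕ e) ∗ ({1}^i), where the inner sum is over all sequences e of nonnegative integers with dep(e) = r and wt(e) = m − i, and {1}^j denotes the index consisting of j entries equal to 1. -/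
/-- The shuffle product on the free ℚ-vector space `I = (List ℕ →₀ ℚ)` on indices,
given on basis elements. -/
noncomputable def sh : List ℕ → List ℕ → (List ℕ →₀ ℚ)
  | [], l => Finsupp.single l 1
  | a :: k, [] => Finsupp.single (a :: k) 1
  | a :: k, b :: l =>
      Finsupp.mapDomain (a :: ·) (sh k (b :: l)) +
      Finsupp.mapDomain (b :: ·) (sh (a :: k) l)
  termination_by k l => k.length + l.length

/-- The harmonic product on the free ℚ-vector space `I = (List ℕ →₀ ℚ)` on indices,
given on basis elements. -/
noncomputable def harm : List ℕ → List ℕ → (List ℕ →₀ ℚ)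
  | [], l => Finsupp.single l 1
  | a :: k, [] => Finsupp.single (a :: k) 1
  | a :: k, b :: l =>
      Finsupp.mapDomain (a :: ·) (harm k (b :: l)) +
      Finsupp.mapDomain (b :: ·) (harm (a :: k) l) -
      Finsupp.mapDomain ((a + b) :: ·) (harm k l)
  termination_by k l => k.length + l.length

/-!
Write `E(k, m)` for the right-hand side. It satisfies the recursion defining `k ⧢ {1}^m`, the
only nontrivial case being `E(a :: k, m + 1) = (a, E(k, m + 1)) + (1, E(a :: k, m))`. Split off
the first entry `j` of `e` and expand each `((a + j) :: (k ⊕ e')) ∗ {1}^(i+1)` by the harmonic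
recursion into `(a + j, …) + (1, …) - (a + j + 1, …)`. The `(1, …)` terms add up to
`(1, E(a :: k, m))`; the first and last families differ by the shift `(i, j) ↦ (i + 1, j - 1)`,
so they telescope down to the terms with `j = 0`, which add up to `(a, E(k, m + 1))`.
-/

open Finset Finset.Nat

theorem Finset.Nat.sum_antidiagonalTuple_succ {M : Type*} [AddCommMonoid M] (r n : ℕ)
    (f : (Fin (r + 1) → ℕ) → M) :
    ∑ e ∈ antidiagonalTuple (r + 1) n, f e =
      ∑ p ∈ antidiagonal n, ∑ e ∈ antidiagonalTuple r p.2, f (Fin.cons p.1 e) := by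
  rw [Finset.sum_sigma']
  refine Finset.sum_nbij' (fun e => ⟨(e 0, n - e 0), Fin.tail e⟩) (fun x => Fin.cons x.1.1 x.2)
    ?_ ?_ ?_ ?_ ?_
  · intro e he
    rw [mem_antidiagonalTuple, Fin.sum_univ_succ] at he
    simp only [Finset.mem_sigma, HasAntidiagonal.mem_antidiagonal,
      mem_antidiagonalTuple, Fin.tail]
    omega
  · rintro ⟨⟨j, n'⟩, e⟩ he
    simp only [Finset.mem_sigma, HasAntidiagonal.mem_antidiagonal,
      mem_antidiagonalTuple] at he
    simp only [mem_antidiagonalTuple, Fin.sum_univ_succ, Fin.cons_zero,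
      Fin.cons_succ]
    omega
  · intro e _; exact Fin.cons_self_tail e
  · rintro ⟨⟨j, n'⟩, e⟩ he
    simp only [Finset.mem_sigma, HasAntidiagonal.mem_antidiagonal,
      mem_antidiagonalTuple] at he
    simp [← he.1]
  · intro e _; exact congrArg f (Fin.cons_self_tail e).symm

noncomputable def prepend (a : ℕ) : (List ℕ →₀ ℚ) →+ (List ℕ →₀ ℚ) :=
  Finsupp.mapDomain.addMonoidHom (a :: ·)

theorem prepend_single (a : ℕ) (l : List ℕ) (q : ℚ) :
    prepend a (Finsupp.single l q) = Finsupp.single (a :: l) q :=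
  Finsupp.mapDomain_single

theorem sh_nil_left (l : List ℕ) : sh [] l = Finsupp.single l 1 := by rw [sh]

theorem sh_nil_right (k : List ℕ) : sh k [] = Finsupp.single k 1 := by cases k <;> rw [sh]

theorem sh_cons_cons (a b : ℕ) (k l : List ℕ) :
    sh (a :: k) (b :: l) = prepend a (sh k (b :: l)) + prepend b (sh (a :: k) l) := by
  rw [sh]; rfl

theorem harm_nil_left (l : List ℕ) : harm [] l = Finsupp.single l 1 := by rw [harm]

theorem harm_nil_right (k : List ℕ) : harm k [] = Finsupp.single k 1 := by cases k <;> rw [harm]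

theorem harm_cons_cons (a b : ℕ) (k l : List ℕ) :
    harm (a :: k) (b :: l) = prepend a (harm k (b :: l)) + prepend b (harm (a :: k) l)
      - prepend (a + b) (harm k l) := by
  rw [harm]; rfl

theorem harm_cons_replicate_succ (x : ℕ) (L : List ℕ) (i : ℕ) :
    harm (x :: L) (List.replicate (i + 1) 1) =
      prepend x (harm L (List.replicate (i + 1) 1))
        + prepend 1 (harm (x :: L) (List.replicate i 1))
        - prepend (x + 1) (harm L (List.replicate i 1)) := by
  rw [List.replicate_succ, harm_cons_cons]

def indexAdd (k : List ℕ) (e : Fin k.length → ℕ) : List ℕ :=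
  List.ofFn fun j => k.get j + e j

theorem indexAdd_zero (k : List ℕ) : indexAdd k 0 = k := by
  simp [indexAdd]

theorem indexAdd_cons (a : ℕ) (k : List ℕ) (e : Fin (k.length + 1) → ℕ) :
    indexAdd (a :: k) e = (a + e 0) :: indexAdd k (Fin.tail e) := by
  simp [indexAdd, List.ofFn_succ, Fin.tail]

noncomputable def raisedHarm (k : List ℕ) (i n : ℕ) : List ℕ →₀ ℚ :=
  ∑ e ∈ antidiagonalTuple k.length n, harm (indexAdd k e) (List.replicate i 1)

noncomputable def harmExpansion (k : List ℕ) (m : ℕ) : List ℕ →₀ ℚ :=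
  ∑ p ∈ antidiagonal m, raisedHarm k p.1 p.2

noncomputable def prependSum (c : ℕ) (v : ℕ → List ℕ →₀ ℚ) (n : ℕ) :
    List ℕ →₀ ℚ :=
  ∑ p ∈ antidiagonal n, prepend (c + p.1) (v p.2)

theorem prependSum_zero (c : ℕ) (v : ℕ → List ℕ →₀ ℚ) :
    prependSum c v 0 = prepend c (v 0) := by
  simp [prependSum]

theorem prependSum_succ (c : ℕ) (v : ℕ → List ℕ →₀ ℚ) (n : ℕ) :
    prependSum c v (n + 1) = prepend c (v (n + 1)) + prependSum (c + 1) v n := by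
  simp only [prependSum, Nat.sum_antidiagonal_succ, add_zero, add_right_comm _ 1, add_assoc]

theorem raisedHarm_cons (a : ℕ) (k : List ℕ) (i n : ℕ) :
    raisedHarm (a :: k) i n = ∑ p ∈ antidiagonal n, ∑ e ∈ antidiagonalTuple k.length p.2,
      harm ((a + p.1) :: indexAdd k e) (List.replicate i 1) := by
  simp only [raisedHarm, List.length_cons, sum_antidiagonalTuple_succ, indexAdd_cons,
    Fin.cons_zero, Fin.tail_cons]

theorem raisedHarm_cons_zero (a : ℕ) (k : List ℕ) (n : ℕ) :
    raisedHarm (a :: k) 0 n = prependSum a (raisedHarm k 0) n := by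
  rw [raisedHarm_cons]
  simp only [prependSum, raisedHarm, map_sum, List.replicate_zero, harm_nil_right,
    prepend_single]

theorem raisedHarm_cons_succ (a : ℕ) (k : List ℕ) (i n : ℕ) :
    raisedHarm (a :: k) (i + 1) n = prependSum a (raisedHarm k (i + 1)) n
      + prepend 1 (raisedHarm (a :: k) i n) - prependSum (a + 1) (raisedHarm k i) n := by
  rw [raisedHarm_cons, raisedHarm_cons]
  simp only [prependSum, raisedHarm, map_sum, ← Finset.sum_add_distrib,
    ← Finset.sum_sub_distrib, harm_cons_replicate_succ, add_right_comm a 1]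

theorem harmExpansion_nil (m : ℕ) :
    harmExpansion [] m = Finsupp.single (List.replicate m 1) 1 := by
  cases m with
  | zero => simp [harmExpansion, raisedHarm, indexAdd, harm_nil_left]
  | succ m =>
    simp [harmExpansion, Nat.sum_antidiagonal_succ', raisedHarm, indexAdd, harm_nil_left]

theorem harmExpansion_zero (k : List ℕ) : harmExpansion k 0 = Finsupp.single k 1 := by
  simp [harmExpansion, raisedHarm, antidiagonalTuple_zero_right, indexAdd_zero,
    harm_nil_right]

theorem harmExpansion_cons_succ (a : ℕ) (k : List ℕ) (m : ℕ) :
    harmExpansion (a :: k) (m + 1) =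
      prepend a (harmExpansion k (m + 1)) + prepend 1 (harmExpansion (a :: k) m) := by
  set F : ℕ → ℕ → List ℕ →₀ ℚ := fun i n => prependSum a (raisedHarm k i) n
  have hshift (i n : ℕ) : prependSum (a + 1) (raisedHarm k i) n =
      F i (n + 1) - prepend a (raisedHarm k i (n + 1)) :=
    eq_sub_of_add_eq' (prependSum_succ a _ n).symm
  have htelescope : F 0 (m + 1) + ∑ p ∈ antidiagonal m, F (p.1 + 1) p.2 =
      prepend a (raisedHarm k (m + 1) 0) + ∑ p ∈ antidiagonal m, F p.1 (p.2 + 1) := by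
    rw [← Nat.sum_antidiagonal_succ (f := fun p => F p.1 p.2), Nat.sum_antidiagonal_succ']
    simp only [F, prependSum_zero]
  rw [harmExpansion, harmExpansion, harmExpansion, Nat.sum_antidiagonal_succ, map_sum,
    Nat.sum_antidiagonal_succ']
  simp only [raisedHarm_cons_zero, raisedHarm_cons_succ, hshift, map_sum,
    Finset.sum_add_distrib, Finset.sum_sub_distrib]
  linear_combination (norm := module) htelescope

theorem sh_replicate_one_eq_harmExpansion (k : List ℕ) (m : ℕ) :
    sh k (List.replicate m 1) = harmExpansion k m := by
  induction k generalizing m with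
  | nil => rw [sh_nil_left, harmExpansion_nil]
  | cons a k ihk =>
    induction m with
    | zero => rw [List.replicate_zero, sh_nil_right, harmExpansion_zero]
    | succ m ihm =>
      rw [List.replicate_succ, sh_cons_cons, ← List.replicate_succ, ihk, ihm,
        harmExpansion_cons_succ]

theorem sh_replicate_one_eq_sum_harm_general (k : List ℕ) (m : ℕ) :
    sh k (List.replicate m 1)
    = ∑ i ∈ Finset.range (m + 1),
        ∑ e ∈ Finset.Nat.antidiagonalTuple k.length (m - i),
          harm (List.ofFn fun j => k.get j + e j) (List.replicate i 1) := by
  rw [sh_replicate_one_eq_harmExpansion, harmExpansion,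
    Nat.sum_antidiagonal_eq_sum_range_succ (fun i n => raisedHarm k i n)]
  rfl

/-- `k ⧢ ({1}^m) = ∑_{i=0}^m ∑_{wt(e)=m-i, dep(e)=dep(k)} (k ⊕ e) ∗ ({1}^i)` in the free
ℚ-vector space on indices. -/
theorem sh_replicate_one_eq_sum_harm (k : List ℕ) (hpos : ∀ x ∈ k, 1 ≤ x) (m : ℕ) :
    sh k (List.replicate m 1)
    = ∑ i ∈ Finset.range (m + 1),
        ∑ e ∈ Finset.Nat.antidiagonalTuple k.length (m - i),
          harm (List.ofFn fun j => k.get j + e j) (List.replicate i 1) :=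
  sh_replicate_one_eq_sum_harm_general k m
end

section
/- For all integers m, n, i ≥ 1 with i ≤ n, one has ∑_{a=0}^m (−1)^a · binom(m+n, a+i) · binom(a+i−1, a) · binom(m+n−a−i, m−a) = binom(m+n, m+i). -/
/-! Since `C(m+n, a+i) C(m+n-a-i, m-a) = C(m+n, m+i) C(m+i, a+i)`, the binomial `C(m+n, m+i)`
factors out of the sum, and it remains to show `∑ₐ (-1)^a C(m+i, a+i) C(a+i-1, a) = 1`.
This follows by induction on `m`: Pascal's rule splits the sum into the previous one and a sum
`∑ₐ (-1)^a C(m+i, a+i-1) C(a+i-1, a) = C(m+i, i-1) ∑ₐ (-1)^a C(m+1, a)`, which vanishes. -/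

open Finset

namespace Nat

theorem add_choose_mul_choose_eq (m j a : ℕ) :
    (m + j + 1).choose (a + j) * (a + j).choose a = (m + j + 1).choose j * (m + 1).choose a := by
  rw [choose_symm_add, choose_mul (Nat.le_add_left j a)]
  congr 2 <;> omega

theorem choose_mul_choose_sub_eq {m a : ℕ} (n i : ℕ) (ha : a ≤ m) :
    (m + n).choose (a + i) * (m + n - a - i).choose (m - a) =
      (m + n).choose (m + i) * (m + i).choose (a + i) := by
  rw [choose_mul (Nat.add_le_add_right ha i)]
  congr 2 <;> omega

end Nat

theorem Int.alternating_sum_add_choose_mul_choose_eq_zero (m j : ℕ) :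
    ∑ a ∈ Finset.range (m + 1 + 1),
      (-1 : ℤ) ^ a * (m + j + 1).choose (a + j) * (a + j).choose a = 0 := by
  calc
    _ = (m + j + 1).choose j *
          ∑ a ∈ Finset.range (m + 1 + 1), (-1 : ℤ) ^ a * (m + 1).choose a := by
      rw [mul_sum]
      refine sum_congr rfl fun a _ => ?_
      rw [mul_assoc, ← Nat.cast_mul, Nat.add_choose_mul_choose_eq]
      push_cast
      ring
    _ = 0 := by rw [Int.alternating_sum_range_choose_of_ne (Nat.succ_ne_zero m), mul_zero]

theorem Int.alternating_sum_choose_mul_choose_eq_one (m j : ℕ) :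
    ∑ a ∈ Finset.range (m + 1),
      (-1 : ℤ) ^ a * (m + j + 1).choose (a + j + 1) * (a + j).choose a = 1 := by
  induction m with
  | zero => simp
  | succ m ih =>
    have pascal : ∀ a, ((m + 1 + j + 1).choose (a + j + 1) : ℤ) =
        (m + j + 1).choose (a + j) + (m + j + 1).choose (a + j + 1) := fun a => by
      rw [show m + 1 + j + 1 = m + j + 1 + 1 by omega, Nat.choose_succ_succ', Nat.cast_add]
    have top_vanishes : (m + j + 1).choose (m + 1 + j + 1) = 0 :=
      Nat.choose_eq_zero_of_lt (by omega)
    simp only [pascal, add_mul, mul_add, sum_add_distrib]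
    rw [Int.alternating_sum_add_choose_mul_choose_eq_zero, zero_add, sum_range_succ, top_vanishes,
      ih]
    simp

theorem binom_identity_one_general (m n i : ℕ) (hi : 1 ≤ i) :
    ∑ a ∈ Finset.range (m + 1),
      (-1 : ℤ) ^ a * ((m + n).choose (a + i) : ℤ) * ((a + i - 1).choose a : ℤ)
        * ((m + n - a - i).choose (m - a) : ℤ)
    = ((m + n).choose (m + i) : ℤ) := by
  obtain ⟨j, rfl⟩ : ∃ j, i = j + 1 := ⟨i - 1, by omega⟩
  have factor : ∀ a ∈ range (m + 1),
      (-1 : ℤ) ^ a * (m + n).choose (a + (j + 1)) * (a + (j + 1) - 1).choose a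
          * (m + n - a - (j + 1)).choose (m - a) =
        (m + n).choose (m + (j + 1)) *
          ((-1 : ℤ) ^ a * (m + j + 1).choose (a + j + 1) * (a + j).choose a) := fun a ha => by
    have h := congrArg (Nat.cast : ℕ → ℤ)
      (Nat.choose_mul_choose_sub_eq n (j + 1) (Nat.lt_succ_iff.mp (mem_range.mp ha)))
    push_cast at h
    rw [show a + (j + 1) - 1 = a + j by omega]
    linear_combination (-1 : ℤ) ^ a * (a + j).choose a * h
  rw [sum_congr rfl factor, ← mul_sum, Int.alternating_sum_choose_mul_choose_eq_one, mul_one]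

theorem binom_identity_one (m n i : ℕ) (hm : 1 ≤ m) (hn : 1 ≤ n) (hi : 1 ≤ i) (hin : i ≤ n) :
    ∑ a ∈ Finset.range (m + 1),
      (-1 : ℤ) ^ a * ((m + n).choose (a + i) : ℤ) * ((a + i - 1).choose a : ℤ)
        * ((m + n - a - i).choose (m - a) : ℤ)
    = ((m + n).choose (m + i) : ℤ) :=
  binom_identity_one_general m n i hi
end

section
/- For all integers m, n, i ≥ 1 with i ≤ n, one has ∑_{a=0}^m (−1)^a · binom(m+n, a+i−1) · binom(a+i−1, a) · binom(m+n−a−i, m−a) = (−1)^m · binom(m+n, i−1). -/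
/-!
Factoring `C(m+n, a+i-1) C(a+i-1, a) = C(m+n, i-1) C(K, a)` with `K = m + n + 1 - i` pulls out
`C(m+n, i-1)` and leaves `∑ₐ (-1)^a C(K, a) C(K-1-a, m-a)`. By upper negation,
`(-1)^(m-a) C(K-1-a, m-a) = C(m-K, m-a)`, so this sum is `(-1)^m` times the Chu–Vandermonde sum
`∑ₐ C(K, a) C(m-K, m-a) = C(m, m) = 1` over the integers.
-/

theorem Ring.choose_neg_natCast_succ {R : Type*} [Ring R] [BinomialRing R] (r q : ℕ) :
    Ring.choose (-((r + 1 : ℕ) : R)) q = (-1) ^ q * ((r + q).choose q : R) := by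
  rw [Ring.choose_neg, Units.smul_def, Int.coe_negOnePow_natCast, zsmul_eq_mul,
    show ((r + 1 : ℕ) : R) + q - 1 = ((r + q : ℕ) : R) by push_cast; abel, Ring.choose_natCast]
  push_cast
  rfl

theorem Nat.choose_add_mul_choose_left (N a j : ℕ) :
    N.choose (a + j) * (a + j).choose a = N.choose j * (N - j).choose a := by
  rw [Nat.choose_symm_add, Nat.choose_mul (Nat.le_add_left j a), Nat.add_sub_cancel]

theorem Int.alternating_sum_range_choose_mul_choose (m r : ℕ) :
    ∑ a ∈ Finset.range (m + 1),
      (-1 : ℤ) ^ a * ((m + r + 1).choose a : ℤ) * ((m + r - a).choose (m - a) : ℤ) = (-1) ^ m := by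
  have vandermonde := Ring.add_choose_eq (r := ((m + r + 1 : ℕ) : ℤ)) (s := -((r + 1 : ℕ) : ℤ)) m
    (Commute.all _ _)
  rw [show ((m + r + 1 : ℕ) : ℤ) + -((r + 1 : ℕ) : ℤ) = (m : ℤ) by push_cast; ring,
    Ring.choose_natCast, Nat.choose_self, Nat.cast_one,
    Finset.Nat.sum_antidiagonal_eq_sum_range_succ_mk] at vandermonde
  simp only [Ring.choose_natCast, Ring.choose_neg_natCast_succ] at vandermonde
  conv_rhs => rw [← mul_one ((-1 : ℤ) ^ m)]; arg 2; rw [vandermonde]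
  rw [Finset.mul_sum]
  refine Finset.sum_congr rfl fun a ha => ?_
  have ham : a ≤ m := Nat.lt_succ_iff.mp (Finset.mem_range.mp ha)
  have sign : (-1 : ℤ) ^ m * (-1) ^ (m - a) = (-1) ^ a := by
    rw [← Nat.sub_add_cancel ham, pow_add, Nat.add_sub_cancel, mul_right_comm, ← pow_add,
      Even.neg_one_pow ⟨_, rfl⟩, one_mul]
  rw [show r + (m - a) = m + r - a by omega]
  linear_combination (-((m + r + 1).choose a : ℤ) * ((m + r - a).choose (m - a) : ℤ)) * sign

theorem binom_identity_two_general (m n i : ℕ) (hi : 1 ≤ i) (hin : i ≤ n) :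
    ∑ a ∈ Finset.range (m + 1),
      (-1 : ℤ) ^ a * ((m + n).choose (a + i - 1) : ℤ) * ((a + i - 1).choose a : ℤ)
        * ((m + n - a - i).choose (m - a) : ℤ)
    = (-1 : ℤ) ^ m * ((m + n).choose (i - 1) : ℤ) := by
  calc _ = ∑ a ∈ Finset.range (m + 1), ((m + n).choose (i - 1) : ℤ) *
        ((-1) ^ a * ((m + (n - i) + 1).choose a : ℤ) * ((m + (n - i) - a).choose (m - a) : ℤ)) := by
        refine Finset.sum_congr rfl fun a _ => ?_
        have trinomial := Nat.choose_add_mul_choose_left (m + n) a (i - 1)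
        rw [show m + n - (i - 1) = m + (n - i) + 1 by omega] at trinomial
        zify at trinomial
        rw [show a + i - 1 = a + (i - 1) by omega, show m + n - a - i = m + (n - i) - a by omega]
        linear_combination (-1) ^ a * ((m + (n - i) - a).choose (m - a) : ℤ) * trinomial
    _ = _ := by rw [← Finset.mul_sum, Int.alternating_sum_range_choose_mul_choose, mul_comm]

theorem binom_identity_two (m n i : ℕ) (hm : 1 ≤ m) (hn : 1 ≤ n) (hi : 1 ≤ i) (hin : i ≤ n) :
    ∑ a ∈ Finset.range (m + 1),
      (-1 : ℤ) ^ a * ((m + n).choose (a + i - 1) : ℤ) * ((a + i - 1).choose a : ℤ)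
        * ((m + n - a - i).choose (m - a) : ℤ)
    = (-1 : ℤ) ^ m * ((m + n).choose (i - 1) : ℤ) :=
  binom_identity_two_general m n i hi hin
end

section
/- For every integer i ≥ 1 and all sufficiently large primes p, one has ∑_{1≤m_1≤m_2≤⋯≤m_i≤p−1} (m_1 m_2 ⋯ m_i)^{−1} = 0 in 𝔽_p; that is, the finite multiple zeta-star value ζ*_{<p}({1}^i) vanishes. -/
/-!
Indexing by multisets instead of monotone tuples, `ζ*_{<p}({1}^i)` becomes the complete
homogeneous symmetric polynomial of degree `i` evaluated at all elements of `𝔽_p` (inversion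
permutes `𝔽_p`). Multiplying every entry by a unit `c` permutes the multisets and scales the sum
by `c ^ i`; a generator `c` of `𝔽_pˣ` has `c ^ i ≠ 1` when `0 < i < p - 1`, so the sum vanishes.
-/

open scoped Classical in
/-- The truncated multiple zeta-star value `ζ*_{<p}(k₁,…,k_r) = ∑_{1≤m₁≤⋯≤m_r≤p-1} ∏ mᵢ^{-kᵢ}`
computed in `𝔽_p`. -/
noncomputable def fmzvStar (p : ℕ) (k : List ℕ) : ZMod p :=
  ∑ n ∈ Finset.univ.filter
      (fun n : Fin k.length → Fin p => Monotone n ∧ ∀ i, 0 < (n i : ℕ)),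
    ∏ i, (((n i : ℕ) : ZMod p) ^ k.get i)⁻¹

def Sym.monotoneEquiv (α : Type*) [LinearOrder α] (k : ℕ) :
    {f : Fin k → α // Monotone f} ≃ Sym α k where
  toFun f := ⟨List.ofFn f.1, by simp⟩
  invFun m := ⟨fun j => (m.1.sort)[(j : ℕ)]'(by simp),
    fun a b hab => (Multiset.pairwise_sort m.1 (· ≤ ·)).sortedLE.getElem_le_getElem_of_le hab⟩
  left_inv f := by
    have : (List.ofFn f.1).mergeSort (· ≤ ·) = List.ofFn f.1 :=
      List.mergeSort_eq_self _ f.2.sortedLE_ofFn.pairwise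
    ext j
    simp [this]
  right_inv m := by
    apply Sym.coe_injective
    change ((List.ofFn _ : List α) : Multiset α) = m.1
    conv_rhs => rw [← Multiset.sort_eq m.1 (· ≤ ·)]
    exact congrArg _ (List.ext_getElem (by simp) (by simp))

open scoped Classical in
theorem Sym.sum_filter_monotone_prod {α R : Type*} [LinearOrder α] [Fintype α] [CommSemiring R]
    (k : ℕ) (f : α → R) :
    ∑ n ∈ Finset.univ.filter (fun n : Fin k → α => Monotone n), ∏ j, f (n j) =
      ∑ m : Sym α k, ((m : Multiset α).map f).prod := by
  rw [← Finset.sum_subtype_eq_sum_filter, Finset.subtype_univ,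
    ← (Sym.monotoneEquiv α k).sum_comp]
  refine Fintype.sum_congr _ _ fun n => ?_
  change _ = ((List.ofFn n.1 : Multiset α).map f).prod
  simp [List.prod_ofFn]

theorem FiniteField.sum_sym_prod_eq_zero {K : Type*} [Field K] [Fintype K] [DecidableEq K]
    {i : ℕ} (hi : ¬ Fintype.card K - 1 ∣ i) : ∑ m : Sym K i, (m : Multiset K).prod = 0 := by
  obtain ⟨c, hc⟩ : ∃ c : Kˣ, c ^ i ≠ 1 := by
    simpa using (FiniteField.forall_pow_eq_one_iff K i).not.mpr hi
  have hscale : (c : K) ^ i * ∑ m : Sym K i, (m : Multiset K).prod =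
      ∑ m : Sym K i, (m : Multiset K).prod := by
    conv_rhs => rw [← (Sym.equivCongr (Units.mulLeft c)).sum_comp]
    rw [Finset.mul_sum]
    refine Fintype.sum_congr _ _ fun m => ?_
    rw [Sym.equivCongr_apply, Sym.coe_map, Units.mulLeft_apply, Multiset.prod_map_mul,
      Multiset.map_const', Multiset.prod_replicate, Multiset.map_id', Sym.card_coe]
  refine (mul_left_eq_self₀.mp hscale).resolve_left ?_
  rwa [← Units.val_pow_eq_pow_val, Units.val_eq_one]

open scoped Classical in
/-- Since `0⁻¹ = 0` in `ZMod p`, tuples with an entry `0` contribute nothing. -/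
theorem fmzvStar_eq_sum_filter_monotone (p : ℕ) (k : List ℕ) (hk : ∀ j, k.get j ≠ 0) :
    fmzvStar p k = ∑ n ∈ Finset.univ.filter (fun n : Fin k.length → Fin p => Monotone n),
      ∏ j, (((n j : ℕ) : ZMod p) ^ k.get j)⁻¹ := by
  rw [fmzvStar, ← Finset.filter_filter]
  refine Finset.sum_filter_of_ne fun n _ hn j => Nat.pos_of_ne_zero fun h0 => hn ?_
  exact Finset.prod_eq_zero (Finset.mem_univ j)
    (by rw [h0, Nat.cast_zero, zero_pow (hk j), ZMod.inv_zero])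

theorem fmzvStar_replicate_one_eq_sum_sym_prod (p : ℕ) [Fact p.Prime] (i : ℕ) :
    fmzvStar p (List.replicate i 1) = ∑ m : Sym (ZMod p) i, (m : Multiset (ZMod p)).prod := by
  let e : Fin p ≃ ZMod p :=
    { toFun x := ((x : ℕ) : ZMod p)⁻¹
      invFun a := ⟨a⁻¹.val, a⁻¹.val_lt⟩
      left_inv x := by simp [ZMod.val_cast_of_lt x.2]
      right_inv a := by simp }
  rw [fmzvStar_eq_sum_filter_monotone p _ (by simp)]
  simp only [List.get_eq_getElem, List.getElem_replicate, pow_one]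
  rw [Sym.sum_filter_monotone_prod _ fun x : Fin p => ((x : ℕ) : ZMod p)⁻¹,
    List.length_replicate, ← (Sym.equivCongr e).sum_comp]
  simp [e]

/-- `ζ*_{<p}({1}^i) = 0` for all large primes `p`. -/
theorem fmzvStar_replicate_one (i : ℕ) (hi : 1 ≤ i) :
    ∀ᶠ p in Filter.atTop, p.Prime →
      fmzvStar p (List.replicate i 1) = 0 := by
  refine Filter.eventually_atTop.mpr ⟨i + 2, fun p hp hprime => ?_⟩
  have : Fact p.Prime := ⟨hprime⟩
  rw [fmzvStar_replicate_one_eq_sum_sym_prod]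
  refine FiniteField.sum_sym_prod_eq_zero ?_
  rw [ZMod.card]
  exact Nat.not_dvd_of_pos_of_lt hi (by omega)
end
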